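/- For every n ≥ 1, every word w ∈ W_n and every prescribed values a, b, c ∈ ℝ, there exist x0, x1, x2 ∈ ℝ and a harmonic-type function U : K → ℝ with boundary values (x0,x1,x2) such that U(f_w(p0)) = a, U(f_w(p1)) = b and U(f_w(p2)) = c. -/

import Mathlib

open MeasureTheory Filter Set
open scoped ENNReal NNReal Classical

noncomputable section

namespace SG

/-- The three vertices `p₀ = (0,0)`, `p₁ = (1,0)`, `p₂ = (1/2, √3/2)` viewed in `ℂ`. -/
def p : Fin 3 → ℂ := ![0, 1, 1/2 + (Real.sqrt 3 / 2) * Complex.I]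

/-- The three contraction maps `fᵢ x = (x + pᵢ)/2`. -/
def f (i : Fin 3) (x : ℂ) : ℂ := (x + p i) / 2

/-- `K` is the Sierpinski gasket: the (unique) nonempty compact set with
`K = f₀(K) ∪ f₁(K) ∪ f₂(K)`. -/
def IsSG (K : Set ℂ) : Prop :=
  K.Nonempty ∧ IsCompact K ∧ K = f 0 '' K ∪ f 1 '' K ∪ f 2 '' K

/-- `α = log 3 / log 2`. -/
def alpha : ℝ := Real.log 3 / Real.log 2

/-- `β* = log 5 / log 2`. -/
def betastar : ℝ := Real.log 5 / Real.log 2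

/-- The normalized `α`-dimensional Hausdorff measure restricted to `K`. -/
def nu (K : Set ℂ) : Measure ℂ :=
  ((Measure.hausdorffMeasure alpha : Measure ℂ) K)⁻¹ •
    (Measure.hausdorffMeasure alpha : Measure ℂ).restrict K

/-- `f_w` for a finite word `w` over `{0,1,2}` (empty word gives the identity). -/
def fwl : List (Fin 3) → ℂ → ℂ
  | [] => id
  | i :: t => f i ∘ fwl t

/-- `f_w` for a word `w ∈ W_n = {0,1,2}ⁿ`. -/
def fw {n : ℕ} (w : Fin n → Fin 3) : ℂ → ℂ := fwl (List.ofFn w)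

/-- The cell `K_w = f_w(K)`. -/
def Kw (K : Set ℂ) {n : ℕ} (w : Fin n → Fin 3) : Set ℂ := fw w '' K

/-- Adjacency `w⁽¹⁾ ∼ₙ w⁽²⁾`: distinct words with intersecting cells. -/
def Adj (K : Set ℂ) {n : ℕ} (w1 w2 : Fin n → Fin 3) : Prop :=
  w1 ≠ w2 ∧ (Kw K w1 ∩ Kw K w2).Nonempty

/-- `Pₙu(w) = ∫_K u(f_w(x)) ν(dx)`. -/
def P (K : Set ℂ) {n : ℕ} (u : ℂ → ℝ) (w : Fin n → Fin 3) : ℝ :=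
  ∫ x, u (fw w x) ∂(nu K)

/-- `Aₙ(u)`: sum over unordered adjacent pairs in `W_n` of `(Pₙu(w⁽¹⁾) − Pₙu(w⁽²⁾))²`
(written as half the sum over ordered pairs). -/
def A (K : Set ℂ) (n : ℕ) (u : ℂ → ℝ) : ℝ :=
  (1/2) * ∑ w1 : Fin n → Fin 3, ∑ w2 : Fin n → Fin 3,
    if Adj K w1 w2 then (P K u w1 - P K u w2)^2 else 0

/-- The remaining index of `{0,1,2}` besides `i` and `j` (when `i ≠ j`):
since `0+1+2 = 0` in `Fin 3`, it is `-(i+j)`. -/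
def other (i j : Fin 3) : Fin 3 := -(i + j)

/-- `U : K → ℝ` is harmonic-type with boundary values `(x0, x1, x2)`:
continuous on `K`, `U(pᵢ) = xᵢ`, and for every finite word `w` and distinct `i, j`
(with `k` the remaining index),
`U(f_w((pᵢ+pⱼ)/2)) = (2 U(f_w(pᵢ)) + 2 U(f_w(pⱼ)) + U(f_w(p_k)))/5`. -/
def IsHarm (K : Set ℂ) (x0 x1 x2 : ℝ) (U : ℂ → ℝ) : Prop :=
  ContinuousOn U K ∧ U (p 0) = x0 ∧ U (p 1) = x1 ∧ U (p 2) = x2 ∧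
  ∀ (w : List (Fin 3)) (i j : Fin 3), i ≠ j →
    U (fwl w ((p i + p j) / 2)) =
      (2 * U (fwl w (p i)) + 2 * U (fwl w (p j)) + U (fwl w (p (other i j)))) / 5

/-!
Collect the three harmonic functions with boundary values `Pi.single k 1` into `H : ℂ → ℝ³`.
Then `H ∘ f i = harmonicMatrix i *ᵥ H`, where column `j` of `harmonicMatrix i` is the value of
`H` at `f i (p j)` given by the `2/5, 2/5, 1/5` rule. This makes `H` the fixed point of the
operator that replaces `G` by `harmonicMatrix i *ᵥ G ∘ (f i)⁻¹` on each cell `f i '' K`. The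
operator is well defined because two distinct cells meet only at a point
`f i (p j) = f j (p i)`, where both cells prescribe the same value; on functions whose coordinates
sum to `1` it is a `3/5`-contraction in the sup norm.

Every `x ⬝ᵥ H` is harmonic-type, and its value at `fwl w (p k)` is `(x ᵥ* wordMatrix w) k`,
where `wordMatrix w` is a product of invertible matrices `harmonicMatrix i`. Hence the values at
the three vertices of `fwl w '' K` can be prescribed freely.
-/

open Matrix

lemma f_self (i : Fin 3) : f i (p i) = p i := by rw [f]; ring

lemma f_injective (i : Fin 3) : Function.Injective (f i) := fun u v h => by
  simpa [f] using h

lemma two_mul_f_sub (i : Fin 3) (u : ℂ) : 2 * f i u - p i = u := by rw [f]; ring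

lemma continuous_f (i : Fin 3) : Continuous (f i) := by unfold f; fun_prop

lemma dist_f_f (i : Fin 3) (u v : ℂ) : dist (f i u) (f i v) = dist u v / 2 := by
  rw [f, f, dist_eq_norm, dist_eq_norm, ← sub_div, add_sub_add_right_eq_sub, norm_div]
  norm_num

lemma midpoint_p_eq_f (i j : Fin 3) : (p i + p j) / 2 = f i (p j) := by rw [f, add_comm]

lemma eq_single_of_nonneg_of_sum_eq_one {ι : Type*} [Fintype ι] [DecidableEq ι] {v : ι → ℝ}
    (hv : ∀ l, 0 ≤ v l) (hsum : ∑ l, v l = 1) {i : ι} (hi : 1 ≤ v i) : v = Pi.single i 1 := by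
  rw [← Finset.add_sum_erase _ _ (Finset.mem_univ i)] at hsum
  have hrest := Finset.sum_nonneg fun l (_ : l ∈ Finset.univ.erase i) => hv l
  have hzero := (Finset.sum_eq_zero_iff_of_nonneg fun l _ => hv l).mp (by linarith)
  ext l
  by_cases hl : l = i
  · subst hl
    simp only [Pi.single_eq_same]
    linarith
  · rw [Pi.single_eq_of_ne hl, hzero l (Finset.mem_erase.mpr ⟨hl, Finset.mem_univ l⟩)]

def barycentric (z : ℂ) : Fin 3 → ℝ :=
  ![1 - z.re - z.im / √3, z.re - z.im / √3, 2 * z.im / √3]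

lemma continuous_barycentric : Continuous barycentric := by
  refine continuous_pi fun l => ?_
  fin_cases l <;> simp only [barycentric] <;> fun_prop

lemma barycentric_p (k : Fin 3) : barycentric (p k) = Pi.single k 1 := by
  have : √3 ≠ 0 := by positivity
  ext l
  fin_cases k <;> fin_cases l <;> simp [barycentric, p] <;> field_simp <;> norm_num

lemma barycentric_f (i : Fin 3) (z : ℂ) (l : Fin 3) :
    barycentric (f i z) l = (barycentric z l + barycentric (p i) l) / 2 := by
  fin_cases l <;> simp [barycentric, f] <;> ring

lemma sum_barycentric (z : ℂ) : ∑ l, barycentric z l = 1 := by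
  simp only [barycentric, Fin.sum_univ_three, Matrix.cons_val_zero, Matrix.cons_val_one,
    Matrix.cons_val_two, Matrix.head_cons, Matrix.tail_cons]
  ring

lemma barycentric_injective : Function.Injective barycentric := by
  intro z w h
  have h1 : z.re - z.im / √3 = w.re - w.im / √3 := congrFun h 1
  have h2 : 2 * z.im / √3 = 2 * w.im / √3 := congrFun h 2
  have him : z.im = w.im := by
    field_simp at h2
    linarith
  exact Complex.ext (by rw [him] at h1; linarith) him

namespace IsSG

variable {K : Set ℂ}

lemma f_mem (hK : IsSG K) (i : Fin 3) {u : ℂ} (hu : u ∈ K) : f i u ∈ K := by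
  rw [hK.2.2]
  fin_cases i
  exacts [.inl (.inl ⟨u, hu, rfl⟩), .inl (.inr ⟨u, hu, rfl⟩), .inr ⟨u, hu, rfl⟩]

lemma fwl_mem (hK : IsSG K) (w : List (Fin 3)) {z : ℂ} (hz : z ∈ K) : fwl w z ∈ K := by
  induction w with
  | nil => exact hz
  | cons a w ih => exact hK.f_mem a ih

lemma exists_f_eq (hK : IsSG K) {z : ℂ} (hz : z ∈ K) : ∃ i, ∃ u ∈ K, f i u = z := by
  rw [hK.2.2] at hz
  rcases hz with (⟨u, hu, rfl⟩ | ⟨u, hu, rfl⟩) | ⟨u, hu, rfl⟩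
  exacts [⟨0, u, hu, rfl⟩, ⟨1, u, hu, rfl⟩, ⟨2, u, hu, rfl⟩]

/-- A point of `K` closest to `p i` is moved by `f i` to a point of `K` twice as close. -/
lemma p_mem (hK : IsSG K) (i : Fin 3) : p i ∈ K := by
  obtain ⟨z, hz, hmin⟩ := hK.2.1.exists_isMinOn hK.1
    (continuous_id.dist continuous_const : Continuous fun z => dist z (p i)).continuousOn
  have hle : dist z (p i) ≤ dist z (p i) / 2 :=
    calc dist z (p i) ≤ dist (f i z) (f i (p i)) := by
          simpa only [id, f_self] using isMinOn_iff.mp hmin _ (hK.f_mem i hz)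
      _ = dist z (p i) / 2 := dist_f_f i z (p i)
  have : z = p i := dist_le_zero.mp (by linarith [dist_nonneg (x := z) (y := p i)])
  exact this ▸ hz

/-- At a minimum point `z = f i u` of `φ` on `K`, `φ z = (φ u + φ (p i)) / 2 ≥ (φ z + c) / 2`. -/
lemma le_of_forall_le_p (hK : IsSG K) {φ : ℂ → ℝ} (hφ : Continuous φ)
    (hφf : ∀ i z, φ (f i z) = (φ z + φ (p i)) / 2) {c : ℝ} (hc : ∀ i, c ≤ φ (p i))
    {z : ℂ} (hz : z ∈ K) : c ≤ φ z := by
  obtain ⟨z₀, hz₀, hmin⟩ := hK.2.1.exists_isMinOn hK.1 hφ.continuousOn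
  obtain ⟨i, u, hu, rfl⟩ := hK.exists_f_eq hz₀
  have := hφf i u
  linarith [isMinOn_iff.mp hmin u hu, isMinOn_iff.mp hmin z hz, hc i]

lemma barycentric_nonneg (hK : IsSG K) {z : ℂ} (hz : z ∈ K) (l : Fin 3) : 0 ≤ barycentric z l :=
  hK.le_of_forall_le_p (φ := (barycentric · l)) ((continuous_apply l).comp continuous_barycentric)
    (fun i z => barycentric_f i z l)
    (fun i => by by_cases h : l = i <;> simp [barycentric_p, h]) hz

/-- The `i`-th barycentric coordinate of `v` is `1` plus that of `u`, hence at least `1`. -/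
lemma eq_p_of_f_eq_f (hK : IsSG K) {i j : Fin 3} (hij : i ≠ j) {u v : ℂ} (hu : u ∈ K)
    (hv : v ∈ K) (h : f i u = f j v) : v = p i := by
  have hi := congrArg (barycentric · i) h
  simp only [barycentric_f, barycentric_p, Pi.single_apply, hij, if_true, if_false] at hi
  refine barycentric_injective ((eq_single_of_nonneg_of_sum_eq_one (hK.barycentric_nonneg hv)
    (sum_barycentric v) ?_).trans (barycentric_p i).symm)
  linarith [hK.barycentric_nonneg hu i]

end IsSG

/-- The value at `f i (p j)` of the harmonic basis. For `j ≠ i` this is the midpoint rule of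
`IsHarm`; for `j = i` it is `Pi.single i 1`, because `other i i = i`. -/
def midpointValue (i j : Fin 3) : Fin 3 → ℝ :=
  (5 : ℝ)⁻¹ • ((2 : ℝ) • Pi.single i 1 + (2 : ℝ) • Pi.single j 1 + Pi.single (other i j) 1)

def harmonicMatrix (i : Fin 3) : Matrix (Fin 3) (Fin 3) ℝ := (Matrix.of (midpointValue i))ᵀ

def wordMatrix (w : List (Fin 3)) : Matrix (Fin 3) (Fin 3) ℝ := (w.map harmonicMatrix).prod

lemma harmonicMatrix_mulVec_single (i j : Fin 3) :
    harmonicMatrix i *ᵥ Pi.single j 1 = midpointValue i j := by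
  ext l
  simp [harmonicMatrix]

lemma midpointValue_comm (i j : Fin 3) : midpointValue i j = midpointValue j i := by
  rw [midpointValue, midpointValue, other, other, add_comm i j, add_comm ((2 : ℝ) • _)]

lemma midpointValue_self (i : Fin 3) : midpointValue i i = Pi.single i 1 := by
  have : other i i = i := by fin_cases i <;> rfl
  rw [midpointValue, this]
  module

lemma dotProduct_midpointValue (y : Fin 3 → ℝ) (i j : Fin 3) :
    y ⬝ᵥ midpointValue i j = (2 * y i + 2 * y j + y (other i j)) / 5 := by
  simp only [midpointValue, dotProduct_smul, dotProduct_add, dotProduct_single_one, smul_eq_mul]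
  ring

lemma sum_midpointValue (i j : Fin 3) : ∑ l, midpointValue i j l = 1 := by
  simp only [midpointValue, Pi.smul_apply, Pi.add_apply, smul_eq_mul, ← Finset.mul_sum,
    Finset.sum_add_distrib, Finset.sum_pi_single']
  norm_num

lemma sum_harmonicMatrix_mulVec (i : Fin 3) (v : Fin 3 → ℝ) :
    ∑ l, (harmonicMatrix i *ᵥ v) l = ∑ l, v l := by
  simp only [mulVec, dotProduct]
  rw [Finset.sum_comm]
  refine Finset.sum_congr rfl fun m _ => ?_
  rw [← Finset.sum_mul]
  simp [harmonicMatrix, sum_midpointValue]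

/-- On a vector `d` with `∑ d = 0`, row `i` of `harmonicMatrix i` gives `3/5 * d i`, and the other
two rows have entries `0, 2/5, 1/5`. -/
lemma dist_harmonicMatrix_mulVec_le (i : Fin 3) {a b : Fin 3 → ℝ} (h : ∑ l, a l = ∑ l, b l) :
    dist (harmonicMatrix i *ᵥ a) (harmonicMatrix i *ᵥ b) ≤ 3 / 5 * dist a b := by
  refine (dist_pi_le_iff (by positivity)).mpr fun l => ?_
  rw [Real.dist_eq, ← Pi.sub_apply, ← mulVec_sub]
  have hd : ∀ m, |(a - b) m| ≤ dist a b := fun m => dist_le_pi_dist a b m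
  have hsum : (a - b) 0 + (a - b) 1 + (a - b) 2 = 0 := by
    simp only [Fin.sum_univ_three] at h
    simp only [Pi.sub_apply]
    linarith
  generalize a - b = d at hd hsum
  have h0 := abs_le.mp (hd 0)
  have h1 := abs_le.mp (hd 1)
  have h2 := abs_le.mp (hd 2)
  rw [abs_le]
  fin_cases i <;> fin_cases l <;>
    simp +decide [harmonicMatrix, midpointValue, mulVec, dotProduct, Fin.sum_univ_three,
      other, Pi.single_apply] <;>
    constructor <;> linarith

lemma isUnit_harmonicMatrix (i : Fin 3) : IsUnit (harmonicMatrix i) := by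
  rw [isUnit_iff_isUnit_det, isUnit_iff_ne_zero]
  fin_cases i <;>
    simp +decide [det_fin_three, harmonicMatrix, midpointValue, other, Pi.single_apply] <;> norm_num

lemma isUnit_wordMatrix (w : List (Fin 3)) : IsUnit (wordMatrix w) :=
  List.prod_isUnit (by simpa using fun i _ => isUnit_harmonicMatrix i)

structure IsHarmonicBasis (K : Set ℂ) (H : ℂ → Fin 3 → ℝ) : Prop where
  continuousOn : ContinuousOn H K
  apply_p : ∀ k, H (p k) = Pi.single k 1
  apply_f : ∀ i, ∀ u ∈ K, H (f i u) = harmonicMatrix i *ᵥ H u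

def cellIndex (K : Set ℂ) (z : ℂ) : Fin 3 := Classical.epsilon fun i => z ∈ f i '' K

def subdivide (K : Set ℂ) (G : ℂ → Fin 3 → ℝ) (z : ℂ) : Fin 3 → ℝ :=
  harmonicMatrix (cellIndex K z) *ᵥ G (2 * z - p (cellIndex K z))

namespace IsSG

variable {K : Set ℂ}

lemma mem_image_cellIndex (hK : IsSG K) {z : ℂ} (hz : z ∈ K) : z ∈ f (cellIndex K z) '' K :=
  Classical.epsilon_spec (p := fun i => z ∈ f i '' K) <| by
    obtain ⟨i, u, hu, rfl⟩ := hK.exists_f_eq hz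
    exact ⟨i, u, hu, rfl⟩

lemma two_mul_sub_cellIndex_mem (hK : IsSG K) {z : ℂ} (hz : z ∈ K) :
    2 * z - p (cellIndex K z) ∈ K := by
  obtain ⟨u, hu, hfu⟩ := hK.mem_image_cellIndex hz
  have : 2 * z - p (cellIndex K z) = u := by rw [← two_mul_f_sub (cellIndex K z) u, hfu]
  exact this ▸ hu

variable {G : ℂ → Fin 3 → ℝ}

/-- The chosen cell of `f i u` can differ from `i` only at a point `f i (p j) = f j (p i)`, where
the boundary values of `G` and `midpointValue_comm` make both choices agree. -/
lemma subdivide_f (hK : IsSG K) (hG : ∀ k, G (p k) = Pi.single k 1) (i : Fin 3) {u : ℂ}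
    (hu : u ∈ K) : subdivide K G (f i u) = harmonicMatrix i *ᵥ G u := by
  obtain ⟨v, hv, hvu⟩ := hK.mem_image_cellIndex (hK.f_mem i hu)
  rw [subdivide]
  generalize cellIndex K (f i u) = j at hvu ⊢
  rw [← hvu, two_mul_f_sub]
  by_cases hji : j = i
  · subst hji
    rw [f_injective j hvu]
  · rw [hK.eq_p_of_f_eq_f hji hv hu hvu, hK.eq_p_of_f_eq_f (Ne.symm hji) hu hv hvu.symm, hG, hG,
      harmonicMatrix_mulVec_single, harmonicMatrix_mulVec_single, midpointValue_comm]

lemma continuousOn_subdivide (hK : IsSG K) (hG : ∀ k, G (p k) = Pi.single k 1)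
    (hGc : ContinuousOn G K) : ContinuousOn (subdivide K G) K := by
  have hcell : ∀ i, ContinuousOn (subdivide K G) (f i '' K) := fun i => by
    have hmaps : MapsTo (fun z => 2 * z - p i) (f i '' K) K := by
      rintro _ ⟨u, hu, rfl⟩
      simpa only [two_mul_f_sub] using hu
    refine (((continuous_const (y := harmonicMatrix i)).matrix_mulVec continuous_id).comp_continuousOn
      (hGc.comp (by fun_prop) hmaps)).congr ?_
    rintro _ ⟨u, hu, rfl⟩
    simp only [Function.comp_apply, id, two_mul_f_sub, subdivide_f hK hG i hu]
  have hclosed : ∀ i, IsClosed (f i '' K) := fun i => (hK.2.1.image (continuous_f i)).isClosed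
  have := ((hcell 0).union_of_isClosed (hcell 1) (hclosed 0) (hclosed 1)).union_of_isClosed
    (hcell 2) ((hclosed 0).union (hclosed 1)) (hclosed 2)
  rwa [← hK.2.2] at this

lemma sum_subdivide (hK : IsSG K) (hGs : ∀ u ∈ K, ∑ l, G u l = 1) {z : ℂ} (hz : z ∈ K) :
    ∑ l, subdivide K G z l = 1 := by
  rw [subdivide, sum_harmonicMatrix_mulVec]
  exact hGs _ (hK.two_mul_sub_cellIndex_mem hz)

end IsSG

def extendByZero {K : Set ℂ} (G : C(K, Fin 3 → ℝ)) (z : ℂ) : Fin 3 → ℝ :=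
  if h : z ∈ K then G ⟨z, h⟩ else 0

def basisCandidates (K : Set ℂ) : Set C(K, Fin 3 → ℝ) :=
  {G | (∀ k (hk : p k ∈ K), G ⟨p k, hk⟩ = Pi.single k 1) ∧ ∀ z, ∑ l, G z l = 1}

section FunctionSpace

variable {K : Set ℂ}

lemma extendByZero_of_mem (G : C(K, Fin 3 → ℝ)) {z : ℂ} (hz : z ∈ K) :
    extendByZero G z = G ⟨z, hz⟩ :=
  dif_pos hz

lemma continuousOn_extendByZero (G : C(K, Fin 3 → ℝ)) : ContinuousOn (extendByZero G) K := by
  rw [continuousOn_iff_continuous_domRestrict]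
  convert G.continuous
  ext z : 1
  exact extendByZero_of_mem G z.2

lemma isClosed_basisCandidates : IsClosed (basisCandidates K) := by
  simp only [basisCandidates, ofPred_and, ofPred_forall]
  exact .inter (isClosed_iInter fun k => isClosed_iInter fun hk =>
    isClosed_eq (continuous_eval_const _) continuous_const) (isClosed_iInter fun z =>
    isClosed_eq (continuous_finsetSum _ fun l _ =>
      (continuous_apply l).comp (continuous_eval_const z)) continuous_const)

lemma barycentric_domRestrict_mem :
    ContinuousMap.mk (K.domRestrict barycentric)
      (continuous_barycentric.comp continuous_subtype_val) ∈ basisCandidates K :=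
  ⟨fun k _ => barycentric_p k, fun z => sum_barycentric z⟩

variable {G : C(K, Fin 3 → ℝ)}

lemma extendByZero_p (hK : IsSG K) (hG : G ∈ basisCandidates K) (k : Fin 3) :
    extendByZero G (p k) = Pi.single k 1 := by
  rw [extendByZero_of_mem G (hK.p_mem k), hG.1]

lemma sum_extendByZero (hG : G ∈ basisCandidates K) {u : ℂ} (hu : u ∈ K) :
    ∑ l, extendByZero G u l = 1 := by
  rw [extendByZero_of_mem G hu, hG.2]

def subdivideMap (hK : IsSG K) (G : basisCandidates K) : basisCandidates K :=
  ⟨⟨K.domRestrict (subdivide K (extendByZero G.1)),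
    (hK.continuousOn_subdivide (extendByZero_p hK G.2) (continuousOn_extendByZero G.1)).domRestrict⟩,
    fun k _ => by
      show subdivide K (extendByZero G.1) (p k) = _
      simpa only [f_self, extendByZero_p hK G.2, harmonicMatrix_mulVec_single,
        midpointValue_self] using hK.subdivide_f (extendByZero_p hK G.2) k (hK.p_mem k),
    fun z => hK.sum_subdivide (fun _ => sum_extendByZero G.2) z.2⟩

lemma subdivideMap_apply (hK : IsSG K) (G : basisCandidates K) (z : K) :
    (subdivideMap hK G).1 z = subdivide K (extendByZero G.1) z :=
  rfl

lemma contractingWith_subdivideMap [CompactSpace K] (hK : IsSG K) :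
    ContractingWith (3 / 5) (subdivideMap hK) := by
  refine ⟨by rw [← NNReal.coe_lt_coe]; norm_num, LipschitzWith.of_dist_le_mul fun G G' => ?_⟩
  rw [Subtype.dist_eq, Subtype.dist_eq]
  push_cast
  refine (ContinuousMap.dist_le (by positivity)).mpr fun z => ?_
  have hu := hK.two_mul_sub_cellIndex_mem z.2
  rw [subdivideMap_apply, subdivideMap_apply]
  calc _ ≤ 3 / 5 * dist (extendByZero G.1 (2 * z - p (cellIndex K z)))
        (extendByZero G'.1 (2 * z - p (cellIndex K z))) :=
        dist_harmonicMatrix_mulVec_le _ (by rw [sum_extendByZero G.2 hu, sum_extendByZero G'.2 hu])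
    _ ≤ _ := by
        rw [extendByZero_of_mem _ hu, extendByZero_of_mem _ hu]
        gcongr
        exact ContinuousMap.dist_apply_le_dist _

end FunctionSpace

lemma IsSG.exists_isHarmonicBasis {K : Set ℂ} (hK : IsSG K) : ∃ H, IsHarmonicBasis K H := by
  have : CompactSpace K := isCompact_iff_compactSpace.mp hK.2.1
  have : CompleteSpace (basisCandidates K) := isClosed_basisCandidates.completeSpace_coe
  obtain ⟨G, hG, -⟩ := (contractingWith_subdivideMap hK).exists_fixedPoint
    ⟨_, barycentric_domRestrict_mem⟩ (edist_ne_top _ _)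
  refine ⟨extendByZero G.1, continuousOn_extendByZero G.1, extendByZero_p hK G.2,
    fun i u hu => ?_⟩
  have hfu := hK.f_mem i hu
  calc extendByZero G.1 (f i u) = (subdivideMap hK G).1 ⟨f i u, hfu⟩ := by
        rw [hG.eq, extendByZero_of_mem]
    _ = _ := hK.subdivide_f (extendByZero_p hK G.2) i hu

namespace IsHarmonicBasis

variable {K : Set ℂ} {H : ℂ → Fin 3 → ℝ}

lemma apply_fwl (hH : IsHarmonicBasis K H) (hK : IsSG K) (w : List (Fin 3)) {z : ℂ}
    (hz : z ∈ K) : H (fwl w z) = wordMatrix w *ᵥ H z := by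
  induction w with
  | nil => simp [fwl, wordMatrix]
  | cons a w ih =>
    rw [fwl, Function.comp_apply, hH.apply_f a _ (hK.fwl_mem w hz), ih, wordMatrix, wordMatrix,
      List.map_cons, List.prod_cons, mulVec_mulVec]

lemma dotProduct_apply_fwl (hH : IsHarmonicBasis K H) (hK : IsSG K) (x : Fin 3 → ℝ)
    (w : List (Fin 3)) {z : ℂ} (hz : z ∈ K) :
    x ⬝ᵥ H (fwl w z) = (x ᵥ* wordMatrix w) ⬝ᵥ H z := by
  rw [hH.apply_fwl hK w hz, dotProduct_mulVec]

lemma isHarm_dotProduct (hH : IsHarmonicBasis K H) (hK : IsSG K) (x : Fin 3 → ℝ) :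
    IsHarm K (x 0) (x 1) (x 2) (x ⬝ᵥ H ·) := by
  have hp : ∀ k, x ⬝ᵥ H (p k) = x k := fun k => by rw [hH.apply_p, dotProduct_single_one]
  refine ⟨(continuous_const.dotProduct continuous_id).comp_continuousOn hH.continuousOn,
    hp 0, hp 1, hp 2, fun w i j _ => ?_⟩
  simp only [midpoint_p_eq_f, hH.dotProduct_apply_fwl hK x w (hK.f_mem i (hK.p_mem j)),
    hH.dotProduct_apply_fwl hK x w (hK.p_mem _), hH.apply_f i _ (hK.p_mem j), hH.apply_p,
    harmonicMatrix_mulVec_single, dotProduct_midpointValue, dotProduct_single_one]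

end IsHarmonicBasis

theorem statement9_general (K : Set ℂ) (hK : IsSG K) (n : ℕ)
    (w : Fin n → Fin 3) (a b c : ℝ) :
    ∃ (x0 x1 x2 : ℝ) (U : ℂ → ℝ), IsHarm K x0 x1 x2 U ∧
      U (fw w (p 0)) = a ∧ U (fw w (p 1)) = b ∧ U (fw w (p 2)) = c := by
  obtain ⟨H, hH⟩ := hK.exists_isHarmonicBasis
  obtain ⟨x, hx⟩ := vecMul_surjective_iff_isUnit.mpr (isUnit_wordMatrix (List.ofFn w)) ![a, b, c]
  refine ⟨x 0, x 1, x 2, _, hH.isHarm_dotProduct hK x, ?_, ?_, ?_⟩ <;>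
    simp [fw, hH.dotProduct_apply_fwl hK x _ (hK.p_mem _), hH.apply_p, hx]

theorem statement9 (K : Set ℂ) (hK : IsSG K) (n : ℕ) (hn : 1 ≤ n)
    (w : Fin n → Fin 3) (a b c : ℝ) :
    ∃ (x0 x1 x2 : ℝ) (U : ℂ → ℝ), IsHarm K x0 x1 x2 U ∧
      U (fw w (p 0)) = a ∧ U (fw w (p 1)) = b ∧ U (fw w (p 2)) = c :=
  statement9_general K hK n w a b c

end SG
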